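/- arXiv:0912.1841 — 3 statements merged into one kernel-verified Lean document; each statement's English description precedes it below -/
import Mathlib

section
/- Let (μ_n) be a sequence of finite nonnegative Borel measures on ℝ² such that ∬ (x² + y²) ∨ 1 dμ_n(x,y) < ∞ for all n. The sequence of weighted measures ν_n, where ν_n has density (x,y) ↦ (x² + y²) ∨ 1 with respect to μ_n, is tight if and only if both of the following sequences of measures on ℝ are tight: the measures with density x ↦ x² ∨ 1 with respect to the first marginals μ_n ∘ pr₁⁻¹, and the measures with density y ↦ y² ∨ 1 with respect to the second marginals μ_n ∘ pr₂⁻¹. -/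
/-!
The weight `(x² + y²) ∨ 1` dominates `x² ∨ 1`, so each weighted marginal is bounded by the
image of `ν_n` under a coordinate projection; tightness passes to continuous images and to
smaller measures. Conversely, outside the square `[-r, r]²` some coordinate, say `x`, satisfies
`r < |x|` and `|y| ≤ |x|`, and there `(x² + y²) ∨ 1 ≤ 2 (x² ∨ 1)`. Hence the `ν_n`-mass
outside the square is at most twice the sum of the masses of the two weighted marginals
outside `[-r, r]`.
-/

open MeasureTheory

/-- A sequence of measures is tight if for every `ε > 0` there is a compact set
whose complement has measure less than `ε` for all `n`. -/
def TightSeq {α : Type*} [TopologicalSpace α] [MeasurableSpace α]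
    (ν : ℕ → Measure α) : Prop :=
  ∀ ε : ℝ, 0 < ε → ∃ K : Set α, IsCompact K ∧ ∀ n, ν n Kᶜ < ENNReal.ofReal ε

open Filter Set Metric Topology
open scoped ENNReal

section Topological

variable {α β : Type*} [TopologicalSpace α] [MeasurableSpace α] {ν ν' : ℕ → Measure α}

theorem tightSeq_iff_isTightMeasureSet : TightSeq ν ↔ IsTightMeasureSet (range ν) := by
  simp only [isTightMeasureSet_iff_exists_isCompact_measure_compl_le, forall_mem_range]
  constructor
  · intro h ε hε
    obtain ⟨δ, -, hδ, hδε⟩ := ENNReal.lt_iff_exists_real_btwn.mp hε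
    obtain ⟨K, hK, hKν⟩ := h δ (ENNReal.ofReal_pos.mp hδ)
    exact ⟨K, hK, fun n => (hKν n).le.trans hδε.le⟩
  · intro h ε hε
    obtain ⟨K, hK, hKν⟩ := h (ENNReal.ofReal (ε / 2)) (by simpa using hε)
    exact ⟨K, hK, fun n => (hKν n).trans_lt
      ((ENNReal.ofReal_lt_ofReal_iff hε).mpr (half_lt_self hε))⟩

theorem TightSeq.mono (h : TightSeq ν) (hle : ∀ n, ν' n ≤ ν n) : TightSeq ν' := by
  intro ε hε
  obtain ⟨K, hK, hKν⟩ := h ε hε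
  exact ⟨K, hK, fun n => (hle n Kᶜ).trans_lt (hKν n)⟩

theorem TightSeq.map [TopologicalSpace β] [MeasurableSpace β] [OpensMeasurableSpace β]
    [T2Space β] (h : TightSeq ν) {f : α → β} (hf : Continuous f) :
    TightSeq fun n => (ν n).map f := by
  rw [tightSeq_iff_isTightMeasureSet] at h ⊢
  rw [range_comp' (Measure.map f) ν]
  exact h.map hf

end Topological

theorem tightSeq_iff_tendsto_iSup_measure_compl_closedBall {α : Type*} [PseudoMetricSpace α]
    [ProperSpace α] [MeasurableSpace α] {ν : ℕ → Measure α} (x : α) :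
    TightSeq ν ↔ Tendsto (fun r : ℝ => ⨆ n, ν n (closedBall x r)ᶜ) atTop (𝓝 0) := by
  simp only [tightSeq_iff_isTightMeasureSet,
    isTightMeasureSet_iff_tendsto_measure_compl_closedBall x, iSup_range]

theorem withDensity_map_le_map_withDensity {α β : Type*} [MeasurableSpace α] [MeasurableSpace β]
    {μ : Measure α} {φ : α → β} (hφ : Measurable φ) {g : β → ℝ≥0∞} (hg : Measurable g)
    {f : α → ℝ≥0∞} (hgf : ∀ x, g (φ x) ≤ f x) :
    (μ.map φ).withDensity g ≤ (μ.withDensity f).map φ := by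
  refine Measure.le_iff.mpr fun s hs => ?_
  rw [withDensity_apply _ hs, setLIntegral_map hs hg hφ, Measure.map_apply hφ hs,
    withDensity_apply _ (hφ hs)]
  exact lintegral_mono fun x => hgf x

theorem sq_add_sq_sup_one_le_two_mul {x y : ℝ} (h : |y| ≤ |x|) :
    (x ^ 2 + y ^ 2) ⊔ 1 ≤ 2 * (x ^ 2 ⊔ 1) := by
  have hyx : y ^ 2 ≤ x ^ 2 := sq_le_sq.mpr h
  have hx : x ^ 2 ≤ x ^ 2 ⊔ 1 := le_sup_left
  have h1 : (1 : ℝ) ≤ x ^ 2 ⊔ 1 := le_sup_right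
  exact sup_le (by linarith) (by linarith)

theorem withDensity_sq_add_sq_compl_closedBall_le (μ : Measure (ℝ × ℝ)) (r : ℝ) :
    (μ.withDensity fun p => ENNReal.ofReal ((p.1 ^ 2 + p.2 ^ 2) ⊔ 1)) (closedBall 0 r)ᶜ ≤
      2 * ((μ.map Prod.fst).withDensity fun x => ENNReal.ofReal (x ^ 2 ⊔ 1)) (closedBall 0 r)ᶜ +
      2 * ((μ.map Prod.snd).withDensity fun y => ENNReal.ofReal (y ^ 2 ⊔ 1))
        (closedBall 0 r)ᶜ := by
  set w : ℝ → ℝ≥0∞ := fun x => ENNReal.ofReal (x ^ 2 ⊔ 1)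
  have hw : Measurable w := by fun_prop
  have hw_le {x y : ℝ} (h : |y| ≤ |x|) : ENNReal.ofReal ((x ^ 2 + y ^ 2) ⊔ 1) ≤ 2 * w x := by
    rw [← ENNReal.ofReal_ofNat 2, ← ENNReal.ofReal_mul zero_le_two]
    exact ENNReal.ofReal_le_ofReal (sq_add_sq_sup_one_le_two_mul h)
  set S₁ := {p : ℝ × ℝ | r < |p.1| ∧ |p.2| ≤ |p.1|}
  set S₂ := {p : ℝ × ℝ | r < |p.2| ∧ |p.1| ≤ |p.2|}
  -- `ℝ × ℝ` carries the sup norm, so `closedBall 0 r` is the square `[-r, r]²`.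
  have hcover : (closedBall (0 : ℝ × ℝ) r)ᶜ ⊆ S₁ ∪ S₂ := by
    intro p hp
    rw [mem_compl_iff, mem_closedBall_zero_iff, not_le, Prod.norm_def, Real.norm_eq_abs,
      Real.norm_eq_abs] at hp
    rcases le_total |p.2| |p.1| with h | h
    · exact Or.inl ⟨by rwa [max_eq_left h] at hp, h⟩
    · exact Or.inr ⟨by rwa [max_eq_right h] at hp, h⟩
  have hB : MeasurableSet (closedBall (0 : ℝ) r)ᶜ := measurableSet_closedBall.compl
  rw [withDensity_apply _ measurableSet_closedBall.compl, withDensity_apply _ hB,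
    withDensity_apply _ hB, setLIntegral_map hB hw measurable_fst,
    setLIntegral_map hB hw measurable_snd, ← lintegral_const_mul' _ _ ENNReal.ofNat_ne_top,
    ← lintegral_const_mul' _ _ ENNReal.ofNat_ne_top]
  calc ∫⁻ p in (closedBall 0 r)ᶜ, ENNReal.ofReal ((p.1 ^ 2 + p.2 ^ 2) ⊔ 1) ∂μ
      ≤ ∫⁻ p in S₁, ENNReal.ofReal ((p.1 ^ 2 + p.2 ^ 2) ⊔ 1) ∂μ +
          ∫⁻ p in S₂, ENNReal.ofReal ((p.1 ^ 2 + p.2 ^ 2) ⊔ 1) ∂μ :=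
        (lintegral_mono_set hcover).trans (lintegral_union_le _ _ _)
    _ ≤ ∫⁻ p in S₁, 2 * w p.1 ∂μ + ∫⁻ p in S₂, 2 * w p.2 ∂μ := by
        refine add_le_add (setLIntegral_mono (by fun_prop) fun p hp => hw_le hp.2)
          (setLIntegral_mono (by fun_prop) fun p hp => ?_)
        rw [add_comm]
        exact hw_le hp.2
    _ ≤ ∫⁻ p in Prod.fst ⁻¹' (closedBall 0 r)ᶜ, 2 * w p.1 ∂μ +
          ∫⁻ p in Prod.snd ⁻¹' (closedBall 0 r)ᶜ, 2 * w p.2 ∂μ := by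
        gcongr <;> intro p hp <;> simpa [Real.norm_eq_abs] using hp.1

theorem stmt_6_general (μ : ℕ → Measure (ℝ × ℝ)) :
    TightSeq (fun n =>
        (μ n).withDensity (fun p => ENNReal.ofReal ((p.1 ^ 2 + p.2 ^ 2) ⊔ 1))) ↔
      (TightSeq (fun n =>
          ((μ n).map Prod.fst).withDensity (fun x => ENNReal.ofReal (x ^ 2 ⊔ 1))) ∧
        TightSeq (fun n =>
          ((μ n).map Prod.snd).withDensity (fun y => ENNReal.ofReal (y ^ 2 ⊔ 1)))) := by
  constructor
  · intro h
    refine ⟨(h.map continuous_fst).mono fun n =>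
        withDensity_map_le_map_withDensity measurable_fst (by fun_prop) fun p => ?_,
      (h.map continuous_snd).mono fun n =>
        withDensity_map_le_map_withDensity measurable_snd (by fun_prop) fun p => ?_⟩
    · exact ENNReal.ofReal_le_ofReal (sup_le_sup_right (le_add_of_nonneg_right (sq_nonneg _)) 1)
    · exact ENNReal.ofReal_le_ofReal (sup_le_sup_right (le_add_of_nonneg_left (sq_nonneg _)) 1)
  · rintro ⟨h₁, h₂⟩
    rw [tightSeq_iff_tendsto_iSup_measure_compl_closedBall 0] at h₁ h₂ ⊢
    have hlim := (ENNReal.Tendsto.const_mul (a := 2) h₁ (Or.inr ENNReal.ofNat_ne_top)).add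
      (ENNReal.Tendsto.const_mul (a := 2) h₂ (Or.inr ENNReal.ofNat_ne_top))
    rw [mul_zero, add_zero] at hlim
    refine tendsto_of_tendsto_of_tendsto_of_le_of_le tendsto_const_nhds hlim (fun r => zero_le)
      fun r => iSup_le fun n => (withDensity_sq_add_sq_compl_closedBall_le (μ n) r).trans ?_
    gcongr <;> exact le_iSup_of_le n le_rfl

theorem stmt_6 (μ : ℕ → Measure (ℝ × ℝ)) [∀ n, IsFiniteMeasure (μ n)]
    (hfin : ∀ n, (∫⁻ p, ENNReal.ofReal ((p.1 ^ 2 + p.2 ^ 2) ⊔ 1) ∂(μ n)) < ⊤) :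
    TightSeq (fun n =>
        (μ n).withDensity (fun p => ENNReal.ofReal ((p.1 ^ 2 + p.2 ^ 2) ⊔ 1))) ↔
      (TightSeq (fun n =>
          ((μ n).map Prod.fst).withDensity (fun x => ENNReal.ofReal (x ^ 2 ⊔ 1))) ∧
        TightSeq (fun n =>
          ((μ n).map Prod.snd).withDensity (fun y => ENNReal.ofReal (y ^ 2 ⊔ 1)))) :=
  stmt_6_general μ
end

section
/- Let (μ_n) and μ be finite nonnegative Borel measures on ℝ² with ∬ (x² + y²) ∨ 1 dμ_n < ∞ for all n. If ∬ h dμ_n → ∬ h dμ for every continuous h : ℝ² → ℝ such that (x,y) ↦ h(x,y)/((x² + y²) ∨ 1) is bounded, then the sequence of weighted measures ν_n with density (x,y) ↦ (x² + y²) ∨ 1 with respect to μ_n is tight, and consequently the sequence (μ_n) itself is tight. -/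
open MeasureTheory Filter

open Metric Set Topology

lemma aux_tail (ν : Measure (ℝ × ℝ)) (hν : ν Set.univ ≠ ⊤) {ε : ENNReal} (hε : 0 < ε) :
    ∃ k : ℕ, ν (Metric.closedBall 0 (k : ℝ))ᶜ < ε := by
  have hanti : Antitone (fun k : ℕ => (Metric.closedBall (0 : ℝ × ℝ) (k : ℝ))ᶜ) := by
    intro a b hab
    exact Set.compl_subset_compl.2 (Metric.closedBall_subset_closedBall (by exact_mod_cast hab))
  have h1 := tendsto_measure_iInter_atTop (μ := ν)
    (s := fun k : ℕ => (Metric.closedBall (0 : ℝ × ℝ) (k : ℝ))ᶜ)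
    (fun k => (Metric.isClosed_closedBall.measurableSet.compl).nullMeasurableSet)
    hanti ⟨0, ne_top_of_le_ne_top hν (measure_mono (Set.subset_univ _))⟩
  have hempty : (⋂ k : ℕ, (Metric.closedBall (0 : ℝ × ℝ) (k : ℝ))ᶜ) = ∅ := by
    ext p
    simp only [Set.mem_iInter, Set.mem_compl_iff, Metric.mem_closedBall, Set.mem_empty_iff_false,
      iff_false, not_forall, not_not]
    exact ⟨⌈dist p 0⌉₊, Nat.le_ceil _⟩
  rw [hempty, measure_empty] at h1
  exact (h1.eventually_lt_const hε).exists

theorem stmt_8 (μ : ℕ → Measure (ℝ × ℝ)) (μStar : Measure (ℝ × ℝ))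
    [∀ n, IsFiniteMeasure (μ n)] [IsFiniteMeasure μStar]
    (hfin : ∀ n, (∫⁻ p, ENNReal.ofReal ((p.1 ^ 2 + p.2 ^ 2) ⊔ 1) ∂(μ n)) < ⊤)
    (hconv : ∀ h : ℝ × ℝ → ℝ, Continuous h →
        (∃ C : ℝ, ∀ p : ℝ × ℝ, |h p / ((p.1 ^ 2 + p.2 ^ 2) ⊔ 1)| ≤ C) →
        Tendsto (fun n => ∫ p, h p ∂(μ n)) atTop (nhds (∫ p, h p ∂μStar))) :
    TightSeq (fun n =>
        (μ n).withDensity (fun p => ENNReal.ofReal ((p.1 ^ 2 + p.2 ^ 2) ⊔ 1))) ∧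
    TightSeq μ := by
  set w : ℝ × ℝ → ℝ := fun p => (p.1 ^ 2 + p.2 ^ 2) ⊔ 1 with hw_def
  have hwcont : Continuous w :=
    ((continuous_fst.pow 2).add (continuous_snd.pow 2)).max continuous_const
  have hw1 : ∀ p, 1 ≤ w p := fun p => le_max_right _ _
  have hw0 : ∀ p, 0 ≤ w p := fun p => zero_le_one.trans (hw1 p)
  have hwpos : ∀ p, 0 < w p := fun p => lt_of_lt_of_le zero_lt_one (hw1 p)
  -- integrability of w wrt μ n
  have hwint : ∀ n, Integrable w (μ n) := by
    intro n
    refine ⟨hwcont.aestronglyMeasurable, ?_⟩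
    rw [hasFiniteIntegral_iff_norm]
    have : ∀ p : ℝ × ℝ, ENNReal.ofReal ‖w p‖ = ENNReal.ofReal (w p) := fun p => by
      rw [Real.norm_of_nonneg (hw0 p)]
    simp only [this]
    exact hfin n
  -- convergence of ∫ w
  have hwdivw : ∀ p : ℝ × ℝ, w p / w p = 1 := fun p => div_self (hwpos p).ne'
  have hLtend : Tendsto (fun n => ∫ p, w p ∂μ n) atTop (𝓝 (∫ p, w p ∂μStar)) := by
    refine hconv w hwcont ⟨1, fun p => ?_⟩
    rw [hwdivw p]; simp
  set L := ∫ p, w p ∂μStar with hL_def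
  -- truncations
  set g : ℕ → ℝ × ℝ → ℝ := fun R p => min (w p) (R : ℝ) with hg_def
  have hgcont : ∀ R, Continuous (g R) := fun R => hwcont.min continuous_const
  have hg0 : ∀ R p, 0 ≤ g R p := fun R p => le_min (hw0 p) (Nat.cast_nonneg R)
  have hgw : ∀ R p, g R p ≤ w p := fun R p => min_le_left _ _
  have hgbound : ∀ R, ∃ C : ℝ, ∀ p : ℝ × ℝ, |g R p / w p| ≤ C := by
    intro R
    refine ⟨1, fun p => ?_⟩
    rw [abs_div, abs_of_nonneg (hg0 R p), abs_of_nonneg (hw0 p)]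
    exact div_le_one_of_le₀ (hgw R p) (hw0 p)
  have hgint : ∀ R n, Integrable (g R) (μ n) := fun R n =>
    (hwint n).mono (hgcont R).aestronglyMeasurable (ae_of_all _ fun p => by
      rw [Real.norm_of_nonneg (hg0 R p), Real.norm_of_nonneg (hw0 p)]; exact hgw R p)
  have hgle : ∀ R n, ∫ p, g R p ∂μ n ≤ ∫ p, w p ∂μ n := fun R n =>
    integral_mono (hgint R n) (hwint n) (fun p => hgw R p)
  have hgL : ∀ R : ℕ, ∫ p, g R p ∂μStar ≤ L := fun R =>
    le_of_tendsto_of_tendsto' (hconv (g R) (hgcont R) (hgbound R)) hLtend (hgle R)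
  -- lintegral of truncations
  have hglint_ne : ∀ R : ℕ, (∫⁻ p, ENNReal.ofReal (g R p) ∂μStar) ≠ ⊤ := by
    intro R
    refine ne_top_of_le_ne_top ?_ (lintegral_mono (fun p =>
      ENNReal.ofReal_le_ofReal (min_le_right (w p) (R : ℝ))))
    rw [lintegral_const]
    exact ENNReal.mul_ne_top ENNReal.ofReal_ne_top (measure_ne_top μStar _)
  have hgeq : ∀ R : ℕ, (∫⁻ p, ENNReal.ofReal (g R p) ∂μStar) = ENNReal.ofReal (∫ p, g R p ∂μStar) := by
    intro R
    rw [integral_eq_lintegral_of_nonneg_ae (ae_of_all _ (hg0 R)) (hgcont R).aestronglyMeasurable,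
      ENNReal.ofReal_toReal (hglint_ne R)]
  -- monotone convergence: w is integrable wrt μStar (in the lintegral sense)
  have hkey : (∫⁻ p, ENNReal.ofReal (w p) ∂μStar) ≤ ENNReal.ofReal L := by
    have hsup : (∫⁻ p, ENNReal.ofReal (w p) ∂μStar)
        = ⨆ R : ℕ, ∫⁻ p, ENNReal.ofReal (g R p) ∂μStar := by
      have hpt : ∀ p : ℝ × ℝ, ENNReal.ofReal (w p) = ⨆ R : ℕ, ENNReal.ofReal (g R p) := by
        intro p
        refine le_antisymm (le_iSup_of_le ⌈w p⌉₊ ?_) (iSup_le fun R =>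
          ENNReal.ofReal_le_ofReal (hgw R p))
        rw [show g ⌈w p⌉₊ p = w p from min_eq_left (Nat.le_ceil _)]
      calc (∫⁻ p, ENNReal.ofReal (w p) ∂μStar)
          = ∫⁻ p, ⨆ R : ℕ, ENNReal.ofReal (g R p) ∂μStar := lintegral_congr hpt
        _ = ⨆ R : ℕ, ∫⁻ p, ENNReal.ofReal (g R p) ∂μStar :=
            lintegral_iSup (fun R => (hgcont R).measurable.ennreal_ofReal)
              (fun a b hab p => ENNReal.ofReal_le_ofReal
                (min_le_min le_rfl (by exact_mod_cast hab)))
    rw [hsup]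
    exact iSup_le fun R => by rw [hgeq R]; exact ENNReal.ofReal_le_ofReal (hgL R)
  have hwlint_ne : (∫⁻ p, ENNReal.ofReal (w p) ∂μStar) ≠ ⊤ :=
    (lt_of_le_of_lt hkey ENNReal.ofReal_lt_top).ne
  set ν : ℕ → Measure (ℝ × ℝ) := fun n => (μ n).withDensity (fun p => ENNReal.ofReal (w p))
    with hν_def
  have hνtight : TightSeq ν := by
    intro ε hε
    set νStar := μStar.withDensity (fun p => ENNReal.ofReal (w p)) with hνS_def
    have hνS_univ : νStar Set.univ ≠ ⊤ := by
      rw [hνS_def, withDensity_apply _ MeasurableSet.univ, setLIntegral_univ]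
      exact hwlint_ne
    obtain ⟨R, hR⟩ := aux_tail νStar hνS_univ (ENNReal.ofReal_pos.mpr (half_pos hε))
    set φ : ℝ × ℝ → ℝ := fun p => max 0 (min 1 (‖p‖ - R)) with hφ_def
    have hφcont : Continuous φ :=
      continuous_const.max (continuous_const.min (continuous_norm.sub continuous_const))
    have hφ0 : ∀ p, 0 ≤ φ p := fun p => le_max_left _ _
    have hφ1 : ∀ p, φ p ≤ 1 := fun p => max_le zero_le_one (min_le_left _ _)
    have hφzero : ∀ p : ℝ × ℝ, ‖p‖ ≤ R → φ p = 0 := fun p hp =>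
      max_eq_left ((min_le_right _ _).trans (by linarith))
    have hφone : ∀ p : ℝ × ℝ, (R : ℝ) + 1 ≤ ‖p‖ → φ p = 1 := by
      intro p hp
      show max 0 (min 1 (‖p‖ - R)) = 1
      rw [min_eq_left (by linarith), max_eq_right zero_le_one]
    set h : ℝ × ℝ → ℝ := fun p => w p * φ p with hh_def
    have hhcont : Continuous h := hwcont.mul hφcont
    have hh0 : ∀ p, 0 ≤ h p := fun p => mul_nonneg (hw0 p) (hφ0 p)
    have hhw : ∀ p, h p ≤ w p := fun p => mul_le_of_le_one_right (hw0 p) (hφ1 p)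
    have hhbound : ∃ C : ℝ, ∀ p : ℝ × ℝ, |h p / w p| ≤ C := by
      refine ⟨1, fun p => ?_⟩
      show |w p * φ p / w p| ≤ 1
      rw [mul_comm, mul_div_assoc, hwdivw p, mul_one, abs_of_nonneg (hφ0 p)]
      exact hφ1 p
    have hh_lint_le : (∫⁻ p, ENNReal.ofReal (h p) ∂μStar)
        ≤ νStar (Metric.closedBall 0 (R : ℝ))ᶜ := by
      rw [hνS_def, withDensity_apply _ Metric.isClosed_closedBall.measurableSet.compl,
        ← lintegral_indicator Metric.isClosed_closedBall.measurableSet.compl _]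
      refine lintegral_mono fun p => ?_
      by_cases hp : p ∈ (Metric.closedBall (0 : ℝ × ℝ) (R : ℝ))ᶜ
      · rw [Set.indicator_of_mem hp]
        exact ENNReal.ofReal_le_ofReal (hhw p)
      · rw [Set.indicator_of_notMem hp]
        have hp' : ‖p‖ ≤ R := by
          simpa [Metric.mem_closedBall, dist_zero_right] using Set.notMem_compl_iff.mp hp
        show ENNReal.ofReal (w p * φ p) ≤ 0
        rw [hφzero p hp', mul_zero]
        simp
    have hLh : ∫ p, h p ∂μStar < ε / 2 := by
      rw [integral_eq_lintegral_of_nonneg_ae (ae_of_all _ hh0) hhcont.aestronglyMeasurable]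
      calc (∫⁻ p, ENNReal.ofReal (h p) ∂μStar).toReal
          < (ENNReal.ofReal (ε / 2)).toReal :=
            ENNReal.toReal_strict_mono ENNReal.ofReal_ne_top (lt_of_le_of_lt hh_lint_le hR)
        _ = ε / 2 := ENNReal.toReal_ofReal (by linarith)
    obtain ⟨N, hN⟩ := Filter.eventually_atTop.mp
      ((hconv h hhcont hhbound).eventually_lt_const hLh)
    have hνn_univ : ∀ n, ν n Set.univ ≠ ⊤ := by
      intro n
      rw [hν_def]
      simp only []
      rw [withDensity_apply _ MeasurableSet.univ, setLIntegral_univ]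
      exact (hfin n).ne
    choose r hr using fun n => aux_tail (ν n) (hνn_univ n) (ENNReal.ofReal_pos.mpr hε)
    set M : ℕ := max (R + 1) ((Finset.range N).sup r) with hM_def
    refine ⟨Metric.closedBall 0 (M : ℝ), isCompact_closedBall _ _, fun n => ?_⟩
    rcases lt_or_ge n N with hn | hn
    · refine lt_of_le_of_lt (measure_mono (Set.compl_subset_compl.2
        (Metric.closedBall_subset_closedBall ?_))) (hr n)
      exact_mod_cast (Finset.le_sup (Finset.mem_range.2 hn)).trans (le_max_right _ _)
    · have hsub : ν n (Metric.closedBall 0 (M : ℝ))ᶜ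
          ≤ ν n (Metric.closedBall 0 ((R : ℝ) + 1))ᶜ := by
        refine measure_mono (Set.compl_subset_compl.2 (Metric.closedBall_subset_closedBall ?_))
        have : R + 1 ≤ M := le_max_left _ _
        exact_mod_cast this
      refine lt_of_le_of_lt hsub ?_
      have hlint_ne : (∫⁻ p, ENNReal.ofReal (h p) ∂μ n) ≠ ⊤ :=
        ne_top_of_le_ne_top (hfin n).ne
          (lintegral_mono fun p => ENNReal.ofReal_le_ofReal (hhw p))
      calc ν n (Metric.closedBall 0 ((R : ℝ) + 1))ᶜ
          = ∫⁻ p in (Metric.closedBall 0 ((R : ℝ) + 1))ᶜ, ENNReal.ofReal (w p) ∂μ n :=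
            withDensity_apply _ Metric.isClosed_closedBall.measurableSet.compl
        _ ≤ ∫⁻ p in (Metric.closedBall 0 ((R : ℝ) + 1))ᶜ, ENNReal.ofReal (h p) ∂μ n := by
            refine setLIntegral_mono hhcont.measurable.ennreal_ofReal fun p hp => ?_
            have hp' : (R : ℝ) + 1 ≤ ‖p‖ := by
              have := hp
              simp only [Set.mem_compl_iff, Metric.mem_closedBall, dist_zero_right,
                not_le] at this
              linarith
            show ENNReal.ofReal (w p) ≤ ENNReal.ofReal (w p * φ p)
            rw [hφone p hp', mul_one]
        _ ≤ ∫⁻ p, ENNReal.ofReal (h p) ∂μ n := setLIntegral_le_lintegral _ _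
        _ = ENNReal.ofReal (∫ p, h p ∂μ n) := by
            rw [integral_eq_lintegral_of_nonneg_ae (ae_of_all _ hh0)
              hhcont.aestronglyMeasurable, ENNReal.ofReal_toReal hlint_ne]
        _ < ENNReal.ofReal ε := (ENNReal.ofReal_lt_ofReal_iff hε).mpr
            ((hN n hn).trans_le (by linarith))
  refine ⟨hνtight, ?_⟩
  intro ε hε
  obtain ⟨K, hK, hKlt⟩ := hνtight ε hε
  refine ⟨K, hK, fun n => lt_of_le_of_lt ?_ (hKlt n)⟩
  have hKm : MeasurableSet Kᶜ := hK.isClosed.measurableSet.compl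
  calc μ n Kᶜ = ∫⁻ _ in Kᶜ, 1 ∂μ n := (setLIntegral_one _).symm
    _ ≤ ∫⁻ p in Kᶜ, ENNReal.ofReal (w p) ∂μ n := by
        refine setLIntegral_mono hwcont.measurable.ennreal_ofReal fun p _ => ?_
        rw [show (1 : ENNReal) = ENNReal.ofReal 1 by simp]
        exact ENNReal.ofReal_le_ofReal (hw1 p)
    _ = ν n Kᶜ := (withDensity_apply _ hKm).symm
end

section
/- Let P, Q be Borel probability measures on ℝ with finite second moments, with cumulative distribution functions F and G and generalized inverses F⁻, G⁻. Let μ⁺ be the pushforward of Lebesgue measure on (0,1) under the map u ↦ (F⁻(u), G⁻(u)) (the comonotone coupling). Then μ⁺ ∈ M(P,Q) and ∬ xy dμ⁺(x,y) = sup_{μ ∈ M(P,Q)} ∬ xy dμ(x,y). -/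
/-!
The quantile function `quantile P u = inf {x | u ≤ F x}` satisfies `x < quantile P u ↔ F x < u`
on `(0, 1)`, so it pushes the uniform law forward to `P`, and the comonotone coupling gives the
quadrant `(s, ∞) × (t, ∞)` mass `1 - max (F s) (G t) = min (P (s, ∞)) (Q (t, ∞))`, the largest
mass any coupling can give it. By Hoeffding's identity
`x * y = ∬ (1{s < x} - 1{s < 0}) (1{t < y} - 1{t < 0}) ds dt`, and Fubini, `∫ x * y dμ` depends
on a coupling `μ` only through its marginals and, monotonically, through its quadrant masses.
-/

open MeasureTheory

/-- `μ` is a coupling of `P` and `Q`. -/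
def IsCoupling (P Q : Measure ℝ) (μ : Measure (ℝ × ℝ)) : Prop :=
  IsProbabilityMeasure μ ∧ μ.map Prod.fst = P ∧ μ.map Prod.snd = Q

open Set Filter

namespace ProbabilityTheory

noncomputable def quantile (P : Measure ℝ) (u : ℝ) : ℝ := sInf {x : ℝ | u ≤ cdf P x}

section Quantile

variable (P : Measure ℝ) {u : ℝ}

lemma bddBelow_setOf_le_cdf (hu : 0 < u) : BddBelow {x : ℝ | u ≤ cdf P x} := by
  obtain ⟨x₀, hx₀⟩ :=
    ((tendsto_cdf_atBot P).eventually (eventually_lt_nhds hu)).exists_forall_of_atBot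
  exact ⟨x₀, fun x hx => le_of_not_gt fun hlt => hx.not_gt (hx₀ x hlt.le)⟩

lemma nonempty_setOf_le_cdf (hu : u < 1) : {x : ℝ | u ≤ cdf P x}.Nonempty :=
  (((tendsto_cdf_atTop P).eventually (eventually_gt_nhds hu)).exists).imp fun _ => le_of_lt

/-- The infimum defining the quantile is attained, by right continuity of `cdf P`. -/
lemma le_cdf_quantile (hu : u ∈ Ioo 0 1) : u ≤ cdf P (quantile P u) := by
  have hright : ∀ x, quantile P u < x → u ≤ cdf P x := fun x hx => by
    obtain ⟨y, hy, hyx⟩ :=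
      (csInf_lt_iff (bddBelow_setOf_le_cdf P hu.1) (nonempty_setOf_le_cdf P hu.2)).1 hx
    exact hy.trans (monotone_cdf P hyx.le)
  exact ge_of_tendsto (((cdf P).right_continuous _).tendsto.mono_left
    (nhdsWithin_mono _ Ioi_subset_Ici_self)) (eventually_nhdsWithin_of_forall hright)

lemma quantile_le_iff (hu : u ∈ Ioo 0 1) (x : ℝ) : quantile P u ≤ x ↔ u ≤ cdf P x :=
  ⟨fun h => (le_cdf_quantile P hu).trans (monotone_cdf P h),
    fun h => csInf_le (bddBelow_setOf_le_cdf P hu.1) h⟩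

lemma lt_quantile_iff (hu : u ∈ Ioo 0 1) (x : ℝ) : x < quantile P u ↔ cdf P x < u := by
  simpa only [not_le] using (quantile_le_iff P hu x).not

lemma monotoneOn_quantile : MonotoneOn (quantile P) (Ioo 0 1) := fun _ ha _ hb hab =>
  (quantile_le_iff P ha _).2 (hab.trans (le_cdf_quantile P hb))

lemma aemeasurable_quantile : AEMeasurable (quantile P) (volume.restrict (Ioo 0 1)) :=
  aemeasurable_restrict_of_monotoneOn measurableSet_Ioo (monotoneOn_quantile P)

lemma quantile_preimage_Ioi_inter_Ioo (x : ℝ) :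
    quantile P ⁻¹' Ioi x ∩ Ioo 0 1 = Ioo (cdf P x) 1 := by
  ext u
  refine ⟨fun ⟨hx, hu⟩ => ⟨(lt_quantile_iff P hu x).1 hx, hu.2⟩, fun hu => ?_⟩
  have hu' : u ∈ Ioo 0 1 := ⟨(cdf_nonneg P x).trans_lt hu.1, hu.2⟩
  exact ⟨(lt_quantile_iff P hu' x).2 hu.1, hu'⟩

end Quantile

instance : IsProbabilityMeasure (volume.restrict (Ioo (0 : ℝ) 1)) :=
  ⟨by simp [Real.volume_Ioo]⟩

lemma measureReal_Ioi_eq_one_sub_cdf (P : Measure ℝ) [IsProbabilityMeasure P] (x : ℝ) :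
    P.real (Ioi x) = 1 - cdf P x := by
  rw [← compl_Iic, probReal_compl_eq_one_sub measurableSet_Iic, cdf_eq_real]

lemma map_quantile (P : Measure ℝ) [IsProbabilityMeasure P] :
    (volume.restrict (Ioo 0 1)).map (quantile P) = P := by
  have := Measure.isProbabilityMeasure_map (aemeasurable_quantile P)
  refine Measure.eq_of_cdf _ _ (StieltjesFunction.ext fun x => ?_)
  have hIoi := measureReal_Ioi_eq_one_sub_cdf ((volume.restrict (Ioo 0 1)).map (quantile P)) x
  rw [map_measureReal_apply_of_aemeasurable (aemeasurable_quantile P) measurableSet_Ioi,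
    measureReal_restrict_apply' measurableSet_Ioo, quantile_preimage_Ioi_inter_Ioo,
    Real.volume_real_Ioo, max_eq_left (by linarith [cdf_le_one P x])] at hIoi
  linarith

section Comonotone

variable (P Q : Measure ℝ)

noncomputable def comonotoneCoupling : Measure (ℝ × ℝ) :=
  (volume.restrict (Ioo 0 1)).map fun u => (quantile P u, quantile Q u)

lemma aemeasurable_quantile_prodMk :
    AEMeasurable (fun u => (quantile P u, quantile Q u)) (volume.restrict (Ioo 0 1)) :=
  (aemeasurable_quantile P).prodMk (aemeasurable_quantile Q)

lemma isCoupling_comonotoneCoupling [IsProbabilityMeasure P] [IsProbabilityMeasure Q] :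
    IsCoupling P Q (comonotoneCoupling P Q) :=
  ⟨Measure.isProbabilityMeasure_map (aemeasurable_quantile_prodMk P Q),
    by rw [comonotoneCoupling, AEMeasurable.map_map_of_aemeasurable measurable_fst.aemeasurable
      (aemeasurable_quantile_prodMk P Q)]; exact map_quantile P,
    by rw [comonotoneCoupling, AEMeasurable.map_map_of_aemeasurable measurable_snd.aemeasurable
      (aemeasurable_quantile_prodMk P Q)]; exact map_quantile Q⟩

lemma comonotoneCoupling_real_Ioi_prod_Ioi [IsProbabilityMeasure P] [IsProbabilityMeasure Q]
    (s t : ℝ) :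
    (comonotoneCoupling P Q).real (Ioi s ×ˢ Ioi t) = min (P.real (Ioi s)) (Q.real (Ioi t)) := by
  have hpre : (fun u => (quantile P u, quantile Q u)) ⁻¹' (Ioi s ×ˢ Ioi t) ∩ Ioo 0 1
      = Ioo (max (cdf P s) (cdf Q t)) 1 := by
    rw [mk_preimage_prod, inter_inter_distrib_right, quantile_preimage_Ioi_inter_Ioo,
      quantile_preimage_Ioi_inter_Ioo, Ioo_inter_Ioo, min_self]
  rw [comonotoneCoupling, map_measureReal_apply_of_aemeasurable (aemeasurable_quantile_prodMk P Q)
      (measurableSet_Ioi.prod measurableSet_Ioi), measureReal_restrict_apply' measurableSet_Ioo,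
    hpre, Real.volume_real_Ioo, measureReal_Ioi_eq_one_sub_cdf, measureReal_Ioi_eq_one_sub_cdf,
    min_sub_sub_left, max_eq_left (by linarith [max_le (cdf_le_one P s) (cdf_le_one Q t)])]

end Comonotone

noncomputable def hoeffdingKernel (x s : ℝ) : ℝ :=
  (if s < x then 1 else 0) - if s < 0 then 1 else 0

lemma measurable_hoeffdingKernel : Measurable fun q : ℝ × ℝ => hoeffdingKernel q.1 q.2 :=
  (Measurable.ite (measurableSet_lt measurable_snd measurable_fst) measurable_const
    measurable_const).sub
    (Measurable.ite (measurableSet_lt measurable_snd measurable_const) measurable_const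
      measurable_const)

lemma hoeffdingKernel_eq (x s : ℝ) :
    hoeffdingKernel x s = (Ico 0 x).indicator 1 s - (Ico x 0).indicator 1 s := by
  simp only [hoeffdingKernel, indicator_apply, mem_Ico, Pi.one_apply]
  split_ifs <;> grind

lemma abs_hoeffdingKernel (x s : ℝ) :
    |hoeffdingKernel x s| = (Ico 0 x).indicator 1 s + (Ico x 0).indicator 1 s := by
  simp only [hoeffdingKernel, indicator_apply, mem_Ico, Pi.one_apply]
  split_ifs <;> grind

lemma integrable_indicator_one_Ico (a b : ℝ) : Integrable ((Ico a b).indicator (1 : ℝ → ℝ)) :=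
  (integrable_indicator_iff measurableSet_Ico).2 (integrableOn_const measure_Ico_lt_top.ne)

lemma integrable_hoeffdingKernel (x : ℝ) : Integrable (hoeffdingKernel x) := by
  rw [funext (hoeffdingKernel_eq x)]
  exact (integrable_indicator_one_Ico 0 x).sub (integrable_indicator_one_Ico x 0)

lemma integral_hoeffdingKernel (x : ℝ) : ∫ s, hoeffdingKernel x s = x := by
  simp only [hoeffdingKernel_eq]
  rw [integral_sub (integrable_indicator_one_Ico 0 x) (integrable_indicator_one_Ico x 0),
    integral_indicator_one measurableSet_Ico, integral_indicator_one measurableSet_Ico,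
    Real.volume_real_Ico, Real.volume_real_Ico]
  rcases le_total 0 x with hx | hx <;> simp [hx]

lemma integral_abs_hoeffdingKernel (x : ℝ) : ∫ s, |hoeffdingKernel x s| = |x| := by
  simp only [abs_hoeffdingKernel]
  rw [integral_add (integrable_indicator_one_Ico 0 x) (integrable_indicator_one_Ico x 0),
    integral_indicator_one measurableSet_Ico, integral_indicator_one measurableSet_Ico,
    Real.volume_real_Ico, Real.volume_real_Ico]
  rcases le_total 0 x with hx | hx <;> simp [hx, abs_of_nonneg, abs_of_nonpos]

lemma integral_hoeffdingKernel_mul_hoeffdingKernel (x y : ℝ) :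
    ∫ q : ℝ × ℝ, hoeffdingKernel x q.1 * hoeffdingKernel y q.2 = x * y := by
  rw [Measure.volume_eq_prod, integral_prod_mul, integral_hoeffdingKernel,
    integral_hoeffdingKernel]

lemma integrable_hoeffdingKernel_mul_hoeffdingKernel {μ : Measure (ℝ × ℝ)} [SFinite μ]
    (hμ : Integrable (fun p : ℝ × ℝ => p.1 * p.2) μ) :
    Integrable
      (fun z : (ℝ × ℝ) × (ℝ × ℝ) => hoeffdingKernel z.1.1 z.2.1 * hoeffdingKernel z.1.2 z.2.2)
      (μ.prod volume) := by
  have hmeas : Measurable fun z : (ℝ × ℝ) × (ℝ × ℝ) =>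
      hoeffdingKernel z.1.1 z.2.1 * hoeffdingKernel z.1.2 z.2.2 :=
    (measurable_hoeffdingKernel.comp (measurable_fst.fst.prodMk measurable_snd.fst)).mul
      (measurable_hoeffdingKernel.comp (measurable_fst.snd.prodMk measurable_snd.snd))
  refine (integrable_prod_iff hmeas.aestronglyMeasurable).2 ⟨ae_of_all _ fun p => ?_, ?_⟩
  · rw [Measure.volume_eq_prod]
    exact (integrable_hoeffdingKernel p.1).mul_prod (integrable_hoeffdingKernel p.2)
  · have hnorm (p : ℝ × ℝ) :
        ∫ q : ℝ × ℝ, ‖hoeffdingKernel p.1 q.1 * hoeffdingKernel p.2 q.2‖ = ‖p.1 * p.2‖ := by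
      simp only [Real.norm_eq_abs, abs_mul]
      rw [Measure.volume_eq_prod, integral_prod_mul (fun s => |hoeffdingKernel p.1 s|)
        (fun t => |hoeffdingKernel p.2 t|), integral_abs_hoeffdingKernel,
        integral_abs_hoeffdingKernel]
    simpa only [hnorm] using hμ.norm

lemma integral_fst_mul_snd_eq_integral_integral_hoeffdingKernel {μ : Measure (ℝ × ℝ)} [SFinite μ]
    (hμ : Integrable (fun p : ℝ × ℝ => p.1 * p.2) μ) :
    ∫ p, p.1 * p.2 ∂μ =
      ∫ q : ℝ × ℝ, ∫ p, hoeffdingKernel p.1 q.1 * hoeffdingKernel p.2 q.2 ∂μ := by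
  calc ∫ p, p.1 * p.2 ∂μ
      = ∫ p : ℝ × ℝ, (∫ q : ℝ × ℝ, hoeffdingKernel p.1 q.1 * hoeffdingKernel p.2 q.2) ∂μ := by
        simp only [integral_hoeffdingKernel_mul_hoeffdingKernel]
    _ = _ := integral_integral_swap (integrable_hoeffdingKernel_mul_hoeffdingKernel hμ)

lemma integral_hoeffdingKernel_mul_hoeffdingKernel_eq {μ : Measure (ℝ × ℝ)} [IsFiniteMeasure μ]
    (s t : ℝ) :
    ∫ p, hoeffdingKernel p.1 s * hoeffdingKernel p.2 t ∂μ =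
      μ.real (Ioi s ×ˢ Ioi t) - (if t < 0 then 1 else 0) * (μ.map Prod.fst).real (Ioi s)
        - (if s < 0 then 1 else 0) * (μ.map Prod.snd).real (Ioi t)
        + (if s < 0 then 1 else 0) * (if t < 0 then 1 else 0) * μ.real univ := by
  set a : ℝ := if s < 0 then 1 else 0
  set b : ℝ := if t < 0 then 1 else 0
  have hfst : MeasurableSet (Prod.fst ⁻¹' Ioi s : Set (ℝ × ℝ)) := measurable_fst measurableSet_Ioi
  have hsnd : MeasurableSet (Prod.snd ⁻¹' Ioi t : Set (ℝ × ℝ)) := measurable_snd measurableSet_Ioi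
  have hprod : MeasurableSet (Ioi s ×ˢ Ioi t) := measurableSet_Ioi.prod measurableSet_Ioi
  have hexpand (p : ℝ × ℝ) : hoeffdingKernel p.1 s * hoeffdingKernel p.2 t =
      (Ioi s ×ˢ Ioi t).indicator 1 p - b * (Prod.fst ⁻¹' Ioi s).indicator 1 p
        - a * (Prod.snd ⁻¹' Ioi t).indicator 1 p + a * b := by
    by_cases h1 : s < p.1 <;> by_cases h2 : t < p.2 <;> by_cases hs : s < 0 <;>
      by_cases ht : t < 0 <;> simp [hoeffdingKernel, h1, h2, hs, ht, a, b]
  have hind {A : Set (ℝ × ℝ)} (hA : MeasurableSet A) :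
      Integrable (A.indicator (1 : ℝ × ℝ → ℝ)) μ :=
    (integrable_const 1).indicator hA
  have hint₁ : Integrable (fun p => (Ioi s ×ˢ Ioi t).indicator 1 p
      - b * (Prod.fst ⁻¹' Ioi s).indicator (1 : ℝ × ℝ → ℝ) p) μ :=
    (hind hprod).sub ((hind hfst).const_mul b)
  have hint₂ : Integrable (fun p => (Ioi s ×ˢ Ioi t).indicator 1 p
      - b * (Prod.fst ⁻¹' Ioi s).indicator 1 p
      - a * (Prod.snd ⁻¹' Ioi t).indicator (1 : ℝ × ℝ → ℝ) p) μ :=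
    hint₁.sub ((hind hsnd).const_mul a)
  simp only [hexpand]
  rw [integral_add hint₂ (integrable_const _), integral_sub hint₁ ((hind hsnd).const_mul a),
    integral_sub (hind hprod) ((hind hfst).const_mul b),
    integral_const_mul, integral_const_mul, integral_indicator_one hprod,
    integral_indicator_one hfst, integral_indicator_one hsnd, integral_const, smul_eq_mul,
    map_measureReal_apply measurable_fst measurableSet_Ioi,
    map_measureReal_apply measurable_snd measurableSet_Ioi]
  ring

lemma integral_fst_mul_snd_le_of_measureReal_Ioi_prod_Ioi_le {μ ν : Measure (ℝ × ℝ)}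
    [IsFiniteMeasure μ] [IsFiniteMeasure ν] (hfst : μ.map Prod.fst = ν.map Prod.fst)
    (hsnd : μ.map Prod.snd = ν.map Prod.snd)
    (hμ : Integrable (fun p : ℝ × ℝ => p.1 * p.2) μ)
    (hν : Integrable (fun p : ℝ × ℝ => p.1 * p.2) ν)
    (hquadrant : ∀ s t, μ.real (Ioi s ×ˢ Ioi t) ≤ ν.real (Ioi s ×ˢ Ioi t)) :
    ∫ p, p.1 * p.2 ∂μ ≤ ∫ p, p.1 * p.2 ∂ν := by
  have huniv : μ.real univ = ν.real univ := by
    rw [← preimage_univ (f := Prod.fst), ← map_measureReal_apply measurable_fst MeasurableSet.univ,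
      ← map_measureReal_apply measurable_fst MeasurableSet.univ, hfst]
  rw [integral_fst_mul_snd_eq_integral_integral_hoeffdingKernel hμ,
    integral_fst_mul_snd_eq_integral_integral_hoeffdingKernel hν]
  refine integral_mono (integrable_hoeffdingKernel_mul_hoeffdingKernel hμ).integral_prod_right
    (integrable_hoeffdingKernel_mul_hoeffdingKernel hν).integral_prod_right fun q => ?_
  simp only [integral_hoeffdingKernel_mul_hoeffdingKernel_eq, hfst, hsnd, huniv]
  linarith [hquadrant q.1 q.2]

end ProbabilityTheory

open ProbabilityTheory

lemma IsCoupling.measureReal_prod_le {P Q : Measure ℝ} {μ : Measure (ℝ × ℝ)}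
    (hμ : IsCoupling P Q μ) {A B : Set ℝ} (hA : MeasurableSet A) (hB : MeasurableSet B) :
    μ.real (A ×ˢ B) ≤ min (P.real A) (Q.real B) := by
  obtain ⟨_, rfl, rfl⟩ := hμ
  rw [map_measureReal_apply measurable_fst hA, map_measureReal_apply measurable_snd hB]
  exact le_min (measureReal_mono (prod_subset_preimage_fst _ _))
    (measureReal_mono (prod_subset_preimage_snd _ _))

lemma IsCoupling.integrable_fst_mul_snd {P Q : Measure ℝ} {μ : Measure (ℝ × ℝ)}
    (hμ : IsCoupling P Q μ) (hP : Integrable (fun x : ℝ => x ^ 2) P)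
    (hQ : Integrable (fun y : ℝ => y ^ 2) Q) : Integrable (fun p : ℝ × ℝ => p.1 * p.2) μ := by
  obtain ⟨_, rfl, rfl⟩ := hμ
  have hfst : MemLp (fun p : ℝ × ℝ => p.1) 2 μ :=
    (memLp_two_iff_integrable_sq measurable_fst.aestronglyMeasurable).2
      ((integrable_map_measure (by fun_prop) measurable_fst.aemeasurable).1 hP)
  have hsnd : MemLp (fun p : ℝ × ℝ => p.2) 2 μ :=
    (memLp_two_iff_integrable_sq measurable_snd.aestronglyMeasurable).2
      ((integrable_map_measure (by fun_prop) measurable_snd.aemeasurable).1 hQ)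
  exact hfst.integrable_mul hsnd

lemma IsCoupling.integral_fst_mul_snd_le_comonotoneCoupling {P Q : Measure ℝ}
    [IsProbabilityMeasure P] [IsProbabilityMeasure Q] {μ : Measure (ℝ × ℝ)} (hμ : IsCoupling P Q μ)
    (hP : Integrable (fun x : ℝ => x ^ 2) P) (hQ : Integrable (fun y : ℝ => y ^ 2) Q) :
    ∫ p, p.1 * p.2 ∂μ ≤ ∫ p, p.1 * p.2 ∂comonotoneCoupling P Q := by
  have hcomonotone := isCoupling_comonotoneCoupling P Q
  have : IsProbabilityMeasure μ := hμ.1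
  have : IsProbabilityMeasure (comonotoneCoupling P Q) := hcomonotone.1
  refine integral_fst_mul_snd_le_of_measureReal_Ioi_prod_Ioi_le
    (hμ.2.1.trans hcomonotone.2.1.symm) (hμ.2.2.trans hcomonotone.2.2.symm)
    (hμ.integrable_fst_mul_snd hP hQ) (hcomonotone.integrable_fst_mul_snd hP hQ) fun s t => ?_
  rw [comonotoneCoupling_real_Ioi_prod_Ioi]
  exact hμ.measureReal_prod_le measurableSet_Ioi measurableSet_Ioi

theorem stmt_15 (P Q : Measure ℝ) [IsProbabilityMeasure P] [IsProbabilityMeasure Q]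
    (hP : Integrable (fun x : ℝ => x ^ 2) P)
    (hQ : Integrable (fun y : ℝ => y ^ 2) Q)
    (F G : ℝ → ℝ)
    (hF : ∀ x : ℝ, F x = (P (Set.Iic x)).toReal)
    (hG : ∀ y : ℝ, G y = (Q (Set.Iic y)).toReal)
    (Finv Ginv : ℝ → ℝ)
    (hFinv : ∀ ξ : ℝ, Finv ξ = sInf {x : ℝ | ξ ≤ F x})
    (hGinv : ∀ ξ : ℝ, Ginv ξ = sInf {y : ℝ | ξ ≤ G y})
    (μPlus : Measure (ℝ × ℝ))
    (hμPlus : μPlus =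
      (volume.restrict (Set.Ioo (0 : ℝ) 1)).map (fun u => (Finv u, Ginv u))) :
    IsCoupling P Q μPlus ∧
    (∫ p, p.1 * p.2 ∂μPlus) =
      sSup {r : ℝ | ∃ μ : Measure (ℝ × ℝ), IsCoupling P Q μ ∧
        r = ∫ p, p.1 * p.2 ∂μ} := by
  have hFinv' : Finv = quantile P := funext fun ξ => by
    simp only [hFinv, hF, quantile, cdf_eq_real, measureReal_def]
  have hGinv' : Ginv = quantile Q := funext fun ξ => by
    simp only [hGinv, hG, quantile, cdf_eq_real, measureReal_def]
  have hcomonotone : μPlus = comonotoneCoupling P Q := by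
    rw [hμPlus, hFinv', hGinv', comonotoneCoupling]
  subst hcomonotone
  refine ⟨isCoupling_comonotoneCoupling P Q, (IsGreatest.csSup_eq ⟨?_, ?_⟩).symm⟩
  · exact ⟨_, isCoupling_comonotoneCoupling P Q, rfl⟩
  · rintro _ ⟨μ, hμ, rfl⟩
    exact hμ.integral_fst_mul_snd_le_comonotoneCoupling hP hQ
end
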